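/- arXiv:2010.14758 — 2 statements merged into one kernel-verified Lean document; each statement's English description precedes it below -/
import Mathlib

section
/- Let ε ∈ (0,1) and let (x,y) be an (f,g)-fixed point for ε with y > 0. Then x > 0, q1(x) = q2(y), and q2(y) ≤ 1. -/
/-!
With `u = 1 - R1(1 - x)` and `v = 1 - R2(1 - y)` in `[0, 1]`, the fixed-point equations read
`x = ε L1(u) B2(v)` and `y = ε B1(u) L2(v)`. Since `B1` vanishes at `0`, `x = 0` would force
`u = 0` and then `y = 0`; hence `x > 0`, and both `q1 x` and `q2 y` equal `ε B1(u) B2(v)`,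
a product of factors in `[0, 1]`.
-/

open Polynomial Set

namespace Polynomial

variable {R : Type*} [CommSemiring R] [PartialOrder R] [IsOrderedRing R] {p : R[X]}

theorem eval_nonneg_of_coeff_nonneg (hp : ∀ i, 0 ≤ p.coeff i) {t : R} (ht : 0 ≤ t) :
    0 ≤ p.eval t := by
  rw [eval_eq_sum_range]
  exact Finset.sum_nonneg fun i _ => mul_nonneg (hp i) (pow_nonneg ht i)

theorem monotoneOn_eval_of_coeff_nonneg (hp : ∀ i, 0 ≤ p.coeff i) :
    MonotoneOn p.eval (Ici 0) := by
  intro a ha b _ hab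
  dsimp only
  rw [eval_eq_sum_range, eval_eq_sum_range]
  exact Finset.sum_le_sum fun i _ =>
    mul_le_mul_of_nonneg_left (pow_le_pow_left₀ ha hab i) (hp i)

theorem eval_mem_Icc_of_coeff_nonneg (hp : ∀ i, 0 ≤ p.coeff i) (hp1 : p.eval 1 = 1) {t : R}
    (ht : t ∈ Icc 0 1) : p.eval t ∈ Icc 0 1 :=
  ⟨eval_nonneg_of_coeff_nonneg hp ht.1,
    hp1 ▸ monotoneOn_eval_of_coeff_nonneg hp ht.1 (mem_Ici.2 zero_le_one) ht.2⟩

end Polynomial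

theorem stmt_7_general
    (L1 R1 L2 R2 B1 B2 : Polynomial ℝ)
    (hR1c : ∀ i, 0 ≤ R1.coeff i) (hR2c : ∀ i, 0 ≤ R2.coeff i)
    (hB1c : ∀ i, 0 ≤ B1.coeff i) (hB2c : ∀ i, 0 ≤ B2.coeff i)
    (hR1one : R1.eval 1 = 1) (hR2one : R2.eval 1 = 1)
    (hB1one : B1.eval 1 = 1) (hB2one : B2.eval 1 = 1)
    (hB10 : B1.coeff 0 = 0)
    (f g : ℝ → ℝ → ℝ → ℝ)
    (hf : ∀ ε x y, f ε x y = ε * L1.eval (1 - R1.eval (1 - x)) * B2.eval (1 - R2.eval (1 - y)))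
    (hg : ∀ ε x y, g ε x y = ε * B1.eval (1 - R1.eval (1 - x)) * L2.eval (1 - R2.eval (1 - y)))
    (q1 q2 : ℝ → ℝ)
    (hq1 : ∀ x, q1 x = x * B1.eval (1 - R1.eval (1 - x)) / L1.eval (1 - R1.eval (1 - x)))
    (hq2 : ∀ y, q2 y = y * B2.eval (1 - R2.eval (1 - y)) / L2.eval (1 - R2.eval (1 - y)))
    (ε x y : ℝ) (hε : ε ∈ Ioo (0:ℝ) 1)
    (hx : x ∈ Icc (0:ℝ) 1) (hy : y ∈ Icc (0:ℝ) 1) (hypos : 0 < y)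
    (hfix : x = f ε x y ∧ y = g ε x y) :
    0 < x ∧ q1 x = q2 y ∧ q2 y ≤ 1 := by
  obtain ⟨hfx, hfy⟩ := hfix
  rw [hf] at hfx
  rw [hg] at hfy
  rw [hq1, hq2]
  set u := 1 - R1.eval (1 - x) with hu_def
  set v := 1 - R2.eval (1 - y)
  have hu : u ∈ Icc 0 1 := Icc.mem_iff_one_sub_mem.1 <|
    eval_mem_Icc_of_coeff_nonneg hR1c hR1one (Icc.mem_iff_one_sub_mem.1 hx)
  have hv : v ∈ Icc 0 1 := Icc.mem_iff_one_sub_mem.1 <|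
    eval_mem_Icc_of_coeff_nonneg hR2c hR2one (Icc.mem_iff_one_sub_mem.1 hy)
  obtain ⟨hB1u0, hB1u1⟩ := eval_mem_Icc_of_coeff_nonneg hB1c hB1one hu
  obtain ⟨hB2v0, hB2v1⟩ := eval_mem_Icc_of_coeff_nonneg hB2c hB2one hv
  have hx0 : x ≠ 0 := by
    rintro rfl
    have hu0 : u = 0 := by simp [hu_def, hR1one]
    rw [hu0, ← coeff_zero_eq_eval_zero, hB10] at hfy
    simp [hfy] at hypos
  have hL1u : L1.eval u ≠ 0 := fun h => hx0 (by simp [hfx, h])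
  have hL2v : L2.eval v ≠ 0 := fun h => hypos.ne' (by simp [hfy, h])
  have hq1x : x * B1.eval u / L1.eval u = ε * B1.eval u * B2.eval v := by
    rw [div_eq_iff hL1u]
    linear_combination B1.eval u * hfx
  have hq2y : y * B2.eval v / L2.eval v = ε * B1.eval u * B2.eval v := by
    rw [div_eq_iff hL2v]
    linear_combination B2.eval v * hfy
  refine ⟨hx.1.lt_of_ne' hx0, hq1x.trans hq2y.symm, ?_⟩
  calc y * B2.eval v / L2.eval v = ε * B1.eval u * B2.eval v := hq2y
    _ ≤ 1 * 1 * 1 := by gcongr; exact hε.2.le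
    _ = 1 := by ring

/-- Lemma 8 (fixed-curve lemma ingredients): an `(f,g)`-fixed point with `y > 0`
satisfies `x > 0`, `q1(x) = q2(y)`, and `q2(y) ≤ 1`. -/
theorem stmt_7
    (L1 R1 L2 R2 B1 B2 : Polynomial ℝ)
    (hL1c : ∀ i, 0 ≤ L1.coeff i) (hR1c : ∀ i, 0 ≤ R1.coeff i)
    (hL2c : ∀ i, 0 ≤ L2.coeff i) (hR2c : ∀ i, 0 ≤ R2.coeff i)
    (hB1c : ∀ i, 0 ≤ B1.coeff i) (hB2c : ∀ i, 0 ≤ B2.coeff i)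
    (hL1one : L1.eval 1 = 1) (hR1one : R1.eval 1 = 1)
    (hL2one : L2.eval 1 = 1) (hR2one : R2.eval 1 = 1)
    (hB1one : B1.eval 1 = 1) (hB2one : B2.eval 1 = 1)
    (hL1zero : L1.eval 0 = 0) (hB10 : B1.coeff 0 = 0) (hB11 : B1.coeff 1 = 0)
    (hR1nc : ¬ (∀ u : ℝ, R1.eval u = 1))
    (f g : ℝ → ℝ → ℝ → ℝ)
    (hf : ∀ ε x y, f ε x y = ε * L1.eval (1 - R1.eval (1 - x)) * B2.eval (1 - R2.eval (1 - y)))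
    (hg : ∀ ε x y, g ε x y = ε * B1.eval (1 - R1.eval (1 - x)) * L2.eval (1 - R2.eval (1 - y)))
    (q1 q2 : ℝ → ℝ)
    (hq1 : ∀ x, q1 x = x * B1.eval (1 - R1.eval (1 - x)) / L1.eval (1 - R1.eval (1 - x)))
    (hq2 : ∀ y, q2 y = y * B2.eval (1 - R2.eval (1 - y)) / L2.eval (1 - R2.eval (1 - y)))
    (ε x y : ℝ) (hε : ε ∈ Ioo (0:ℝ) 1)
    (hx : x ∈ Icc (0:ℝ) 1) (hy : y ∈ Icc (0:ℝ) 1) (hypos : 0 < y)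
    (hfix : x = f ε x y ∧ y = g ε x y) :
    0 < x ∧ q1 x = q2 y ∧ q2 y ≤ 1 :=
  stmt_7_general L1 R1 L2 R2 B1 B2 hR1c hR2c hB1c hB2c hR1one hR2one hB1one hB2one hB10 f g hf hg q1
    q2 hq1 hq2 ε x y hε hx hy hypos hfix
end

section
/- Under the hypotheses of Construction 1 — namely ε1 := inf{ x / λ1(1−ρ1(1−x)) : x ∈ (0,1] } satisfies 0 < ε1 < ε2 < 1, the layer-2 threshold satisfies inf{ y / λ2(1−ρ2(1−y)) : y ∈ (0,1] } = ε2·a_s, and P0 = ε1/ε2, where x_s := sup{ x ∈ [0,1] : ε2·λ1(1−ρ1(1−x)) ≥ x } and a_s := Λ1(1−ρ1(1−x_s)) — the decoding threshold of the bilayer ensemble equals ε2: ε2* = ε2. -/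
/-!
All polynomials have nonnegative coefficients, so the density-evolution map
`T_ε (x, y) = (f ε x y, g ε x y)` is monotone on the box `[0, 1]²` and its iterates from `(1, 1)`
decrease to a fixed point `(a, b)`.

For `ε < ε2`: since `Λ2 ≤ 1`, `a ≤ ε2 λ1(1 - ρ1(1 - a))`, so `a ≤ x_s` and the factor `Λ1(...)`
of the second layer is at most `a_s`; the layer-2 threshold `ε2 a_s` then forces `b = 0`. With
`b = 0` the first layer sees the erasure rate `ε P0 = ε ε1 / ε2 < ε1`, below its threshold, so
`a = 0`.

For `ε > ε2`: `Λ2 ≥ Λ2(0) = ε1 / ε2` whatever `y` is, so `x` is bounded below by the first layer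
alone run at the erasure rate `ε ε1 / ε2 > ε1`, which keeps it above some `x0 > 0`.
-/

open Polynomial Set Filter Function Topology

namespace Polynomial

variable {P : ℝ[X]} {a b : ℝ}

theorem eval_nonneg_of_coeff_nonneg_s11 (hP : ∀ i, 0 ≤ P.coeff i) (ha : 0 ≤ a) : 0 ≤ P.eval a := by
  rw [eval_eq_sum_range]
  exact Finset.sum_nonneg fun i _ => mul_nonneg (hP i) (pow_nonneg ha i)

theorem eval_mono_of_coeff_nonneg (hP : ∀ i, 0 ≤ P.coeff i) (ha : 0 ≤ a) (hab : a ≤ b) :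
    P.eval a ≤ P.eval b := by
  rw [eval_eq_sum_range, eval_eq_sum_range]
  exact Finset.sum_le_sum fun i _ => mul_le_mul_of_nonneg_left (pow_le_pow_left₀ ha hab i) (hP i)

end Polynomial

def IsDegreeDist (P : ℝ[X]) : Prop := (∀ i, 0 ≤ P.coeff i) ∧ P.eval 1 = 1

theorem IsDegreeDist.eval_mem_Icc {P : ℝ[X]} (hP : IsDegreeDist P) {a : ℝ} (ha : a ∈ Icc 0 1) :
    P.eval a ∈ Icc 0 1 :=
  ⟨eval_nonneg_of_coeff_nonneg_s11 hP.1 ha.1, hP.2 ▸ eval_mono_of_coeff_nonneg hP.1 ha.1 ha.2⟩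

def deMap (L R : ℝ[X]) (x : ℝ) : ℝ := L.eval (1 - R.eval (1 - x))

section DEMap

variable {L R : ℝ[X]} {x : ℝ}

theorem one_sub_eval_one_sub_mem_Icc (hR : IsDegreeDist R) (hx : x ∈ Icc 0 1) :
    1 - R.eval (1 - x) ∈ Icc 0 1 := by
  have h := hR.eval_mem_Icc (a := 1 - x) ⟨by linarith [hx.2], by linarith [hx.1]⟩
  exact ⟨by linarith [h.2], by linarith [h.1]⟩

theorem deMap_nonneg (hL : ∀ i, 0 ≤ L.coeff i) (hR : IsDegreeDist R) (hx : x ∈ Icc 0 1) :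
    0 ≤ deMap L R x :=
  eval_nonneg_of_coeff_nonneg_s11 hL (one_sub_eval_one_sub_mem_Icc hR hx).1

theorem deMap_mem_Icc (hL : IsDegreeDist L) (hR : IsDegreeDist R) (hx : x ∈ Icc 0 1) :
    deMap L R x ∈ Icc 0 1 :=
  hL.eval_mem_Icc (one_sub_eval_one_sub_mem_Icc hR hx)

theorem deMap_monotoneOn (hL : ∀ i, 0 ≤ L.coeff i) (hR : IsDegreeDist R) :
    MonotoneOn (deMap L R) (Icc 0 1) := fun x hx y hy hxy =>
  eval_mono_of_coeff_nonneg hL (one_sub_eval_one_sub_mem_Icc hR hx).1 <|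
    sub_le_sub_left (eval_mono_of_coeff_nonneg hR.1 (sub_nonneg.2 hy.2) (by linarith)) 1

theorem deMap_zero (hR : R.eval 1 = 1) : deMap L R 0 = L.eval 0 := by
  simp [deMap, hR]

@[fun_prop]
theorem continuous_deMap : Continuous (deMap L R) := by
  unfold deMap; fun_prop

end DEMap

theorem MonotoneOn.antitone_iterate_of_map_le {α : Type*} [Preorder α] {T : α → α} {s : Set α}
    {p : α} (hmono : MonotoneOn T s) (hmaps : MapsTo T s s) (hp : p ∈ s) (hTp : T p ≤ p) :
    Antitone fun n => T^[n] p := by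
  have hsucc : ∀ n, T^[n + 1] p = T (T^[n] p) := fun n => iterate_succ_apply' T n p
  refine antitone_nat_of_succ_le fun n => ?_
  induction n with
  | zero => exact hTp
  | succ n ih =>
    simp only [hsucc] at ih ⊢
    exact hmono (hmaps (hmaps.iterate n hp)) (hmaps.iterate n hp) ih

theorem Antitone.exists_tendsto_prod {α β : Type*} [ConditionallyCompletePartialOrderInf α]
    [TopologicalSpace α] [InfConvergenceClass α] [ConditionallyCompletePartialOrderInf β]
    [TopologicalSpace β] [InfConvergenceClass β] {u : ℕ → α × β} (hu : Antitone u)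
    (hbdd : BddBelow (range u)) : ∃ q, Tendsto u atTop (𝓝 q) := by
  have h1 : BddBelow (range fun n => (u n).1) := by
    rw [range_comp' Prod.fst]; exact monotone_fst.map_bddBelow hbdd
  have h2 : BddBelow (range fun n => (u n).2) := by
    rw [range_comp' Prod.snd]; exact monotone_snd.map_bddBelow hbdd
  exact ⟨_, (tendsto_atTop_ciInf (monotone_fst.comp_antitone hu) h1).prodMk_nhds
    (tendsto_atTop_ciInf (monotone_snd.comp_antitone hu) h2)⟩

noncomputable def threshold (φ : ℝ → ℝ) : ℝ := sInf ((fun x => x / φ x) '' Ioc 0 1)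

noncomputable def stuckPoint (φ : ℝ → ℝ) (ε : ℝ) : ℝ := sSup {x | x ∈ Icc 0 1 ∧ x ≤ ε * φ x}

section Threshold

variable {φ : ℝ → ℝ} {x : ℝ}

theorem threshold_le_div (hφ : ∀ y ∈ Ioc 0 1, 0 ≤ φ y) (hx : x ∈ Ioc 0 1) :
    threshold φ ≤ x / φ x :=
  csInf_le ⟨0, forall_mem_image.2 fun y hy => div_nonneg hy.1.le (hφ y hy)⟩ (mem_image_of_mem _ hx)

theorem threshold_mul_le (hφ : ∀ y ∈ Ioc 0 1, 0 ≤ φ y) (hx : x ∈ Ioc 0 1) :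
    threshold φ * φ x ≤ x := by
  rcases (hφ x hx).eq_or_lt with h | h
  · rw [← h, mul_zero]
    exact hx.1.le
  · exact (le_div_iff₀ h).1 (threshold_le_div hφ hx)

theorem exists_lt_mul_of_threshold_lt (hφ : ∀ y ∈ Ioc 0 1, 0 ≤ φ y) (hpos : 0 < threshold φ)
    {c : ℝ} (hc : threshold φ < c) : ∃ x ∈ Ioc 0 1, x < c * φ x := by
  obtain ⟨_, ⟨x, hx, rfl⟩, hlt⟩ :=
    exists_lt_of_csInf_lt ⟨_, mem_image_of_mem _ (right_mem_Ioc.2 one_pos)⟩ hc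
  have hφx : 0 < φ x := by
    refine (hφ x hx).lt_of_ne fun h => ?_
    have := threshold_le_div hφ hx
    rw [← h, div_zero] at this
    linarith
  exact ⟨x, hx, (div_lt_iff₀ hφx).1 hlt⟩

theorem stuckPoint_mem_Icc {ε : ℝ} (hx : x ∈ Icc 0 1) (hxφ : x ≤ ε * φ x) :
    stuckPoint φ ε ∈ Icc x 1 :=
  ⟨le_csSup ⟨1, fun _ hy => hy.1.2⟩ ⟨hx, hxφ⟩, csSup_le ⟨x, hx, hxφ⟩ fun _ hy => hy.1.2⟩

end Threshold

theorem eq_zero_of_le_mul_of_mul_le {y t e c : ℝ} (hy : 0 ≤ y) (he : 0 ≤ e) (hec : e < c)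
    (hle : y ≤ e * t) (hge : c * t ≤ y) : y = 0 := by
  nlinarith

theorem mem_Icc_zero_one_prod {p : ℝ × ℝ} : p ∈ Icc 0 1 ↔ p.1 ∈ Icc 0 1 ∧ p.2 ∈ Icc 0 1 := by
  rw [Icc_prod_eq]
  rfl

def bilayerDE (L1 R1 L2 R2 B1 B2 : ℝ[X]) (e : ℝ) (p : ℝ × ℝ) : ℝ × ℝ :=
  (e * deMap L1 R1 p.1 * deMap B2 R2 p.2, e * deMap B1 R1 p.1 * deMap L2 R2 p.2)

section Bilayer

variable {L1 R1 L2 R2 B1 B2 : ℝ[X]} {e : ℝ}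

theorem continuous_bilayerDE : Continuous (bilayerDE L1 R1 L2 R2 B1 B2 e) := by
  unfold bilayerDE
  fun_prop

theorem bilayerDE_mapsTo (hL1 : IsDegreeDist L1) (hR1 : IsDegreeDist R1) (hL2 : IsDegreeDist L2)
    (hR2 : IsDegreeDist R2) (hB1 : IsDegreeDist B1) (hB2 : IsDegreeDist B2) (he : e ∈ Icc 0 1) :
    MapsTo (bilayerDE L1 R1 L2 R2 B1 B2 e) (Icc 0 1) (Icc 0 1) := by
  intro p hp
  rw [mem_Icc_zero_one_prod] at hp ⊢
  exact ⟨unitInterval.mul_mem (unitInterval.mul_mem he (deMap_mem_Icc hL1 hR1 hp.1))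
      (deMap_mem_Icc hB2 hR2 hp.2),
    unitInterval.mul_mem (unitInterval.mul_mem he (deMap_mem_Icc hB1 hR1 hp.1))
      (deMap_mem_Icc hL2 hR2 hp.2)⟩

theorem bilayerDE_monotoneOn (hL1 : ∀ i, 0 ≤ L1.coeff i) (hR1 : IsDegreeDist R1)
    (hL2 : ∀ i, 0 ≤ L2.coeff i) (hR2 : IsDegreeDist R2) (hB1 : ∀ i, 0 ≤ B1.coeff i)
    (hB2 : ∀ i, 0 ≤ B2.coeff i) (he : 0 ≤ e) :
    MonotoneOn (bilayerDE L1 R1 L2 R2 B1 B2 e) (Icc 0 1) := by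
  intro p hp q hq hpq
  rw [mem_Icc_zero_one_prod] at hp hq
  have step : ∀ {A B : ℝ[X]} {R S : ℝ[X]}, (∀ i, 0 ≤ A.coeff i) → IsDegreeDist R →
      (∀ i, 0 ≤ B.coeff i) → IsDegreeDist S →
      e * deMap A R p.1 * deMap B S p.2 ≤ e * deMap A R q.1 * deMap B S q.2 :=
    fun hA hR hB hS => mul_le_mul
      (mul_le_mul_of_nonneg_left (deMap_monotoneOn hA hR hp.1 hq.1 hpq.1) he)
      (deMap_monotoneOn hB hS hp.2 hq.2 hpq.2) (deMap_nonneg hB hS hp.2)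
      (mul_nonneg he (deMap_nonneg hA hR hq.1))
  exact Prod.mk_le_mk.2 ⟨step hL1 hR1 hB2 hR2, step hB1 hR1 hL2 hR2⟩

theorem bilayerDE_fixedPt_snd_eq_zero (hL1 : ∀ i, 0 ≤ L1.coeff i) (hR1 : IsDegreeDist R1)
    (hL2 : ∀ i, 0 ≤ L2.coeff i) (hR2 : IsDegreeDist R2) (hB1 : ∀ i, 0 ≤ B1.coeff i)
    (hB2 : IsDegreeDist B2) {ε2 : ℝ} (he : 0 ≤ e) (heε2 : e < ε2)
    (hlayer2 : threshold (deMap L2 R2) = ε2 * deMap B1 R1 (stuckPoint (deMap L1 R1) ε2))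
    {p : ℝ × ℝ} (hp : p ∈ Icc 0 1) (hfix : IsFixedPt (bilayerDE L1 R1 L2 R2 B1 B2 e) p) :
    p.2 = 0 := by
  obtain ⟨a, b⟩ := p
  obtain ⟨ha, hb⟩ := mem_Icc_zero_one_prod.1 hp
  obtain ⟨hfa, hfb⟩ := Prod.ext_iff.1 hfix
  simp only [bilayerDE] at hfa hfb
  set s := stuckPoint (deMap L1 R1) ε2
  have hL1a := deMap_nonneg hL1 hR1 ha
  have hs : s ∈ Icc a 1 := by
    refine stuckPoint_mem_Icc ha ?_
    calc a = e * deMap L1 R1 a * deMap B2 R2 b := hfa.symm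
      _ ≤ ε2 * deMap L1 R1 a * 1 :=
        mul_le_mul (by gcongr) (deMap_mem_Icc hB2 hR2 hb).2 (deMap_nonneg hB2.1 hR2 hb)
          (mul_nonneg (he.trans heε2.le) hL1a)
      _ = ε2 * deMap L1 R1 a := mul_one _
  have hB1a : deMap B1 R1 a ≤ deMap B1 R1 s :=
    deMap_monotoneOn hB1 hR1 ha ⟨ha.1.trans hs.1, hs.2⟩ hs.1
  rcases hb.1.eq_or_lt with hb0 | hbpos
  · exact hb0.symm
  refine eq_zero_of_le_mul_of_mul_le hb.1 he heε2 (t := deMap B1 R1 s * deMap L2 R2 b) ?_ ?_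
  · calc b = e * deMap B1 R1 a * deMap L2 R2 b := hfb.symm
      _ ≤ e * deMap B1 R1 s * deMap L2 R2 b := by
        gcongr
        exact deMap_nonneg hL2 hR2 hb
      _ = _ := mul_assoc _ _ _
  · rw [← mul_assoc, ← hlayer2]
    exact threshold_mul_le (fun y hy => deMap_nonneg hL2 hR2 (Ioc_subset_Icc_self hy)) ⟨hbpos, hb.2⟩

theorem bilayerDE_fixedPt_fst_eq_zero (hL1 : ∀ i, 0 ≤ L1.coeff i) (hR1 : IsDegreeDist R1)
    (hR2 : R2.eval 1 = 1) {ε1 ε2 : ℝ} (hε1 : ε1 = threshold (deMap L1 R1)) (hε2 : 0 < ε2)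
    (hP0 : B2.eval 0 = ε1 / ε2) (he : 0 ≤ e) (heε2 : e < ε2) {p : ℝ × ℝ} (hp : p ∈ Icc 0 1)
    (hfix : IsFixedPt (bilayerDE L1 R1 L2 R2 B1 B2 e) p) (hp2 : p.2 = 0) : p.1 = 0 := by
  obtain ⟨a, b⟩ := p
  obtain ⟨ha, -⟩ := mem_Icc_zero_one_prod.1 hp
  dsimp only at hp2
  subst hp2
  have hfa : e * deMap L1 R1 a * (ε1 / ε2) = a := by
    rw [← hP0, ← deMap_zero hR2]
    exact congrArg Prod.fst hfix
  rcases ha.1.eq_or_lt with ha0 | hapos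
  · exact ha0.symm
  refine eq_zero_of_le_mul_of_mul_le ha.1 he heε2 (t := ε1 / ε2 * deMap L1 R1 a) ?_ ?_
  · exact (hfa.symm.trans (by ring)).le
  · rw [← mul_assoc, mul_div_cancel₀ _ hε2.ne', hε1]
    exact threshold_mul_le (fun y hy => deMap_nonneg hL1 hR1 (Ioc_subset_Icc_self hy))
      ⟨hapos, ha.2⟩

theorem tendsto_bilayerDE_iterate_zero (hL1 : IsDegreeDist L1) (hR1 : IsDegreeDist R1)
    (hL2 : IsDegreeDist L2) (hR2 : IsDegreeDist R2) (hB1 : IsDegreeDist B1)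
    (hB2 : IsDegreeDist B2) {ε1 ε2 : ℝ} (hε1 : ε1 = threshold (deMap L1 R1)) (hε2 : 0 < ε2)
    (hε2one : ε2 ≤ 1) (hP0 : B2.eval 0 = ε1 / ε2)
    (hlayer2 : threshold (deMap L2 R2) = ε2 * deMap B1 R1 (stuckPoint (deMap L1 R1) ε2))
    (he : e ∈ Ico 0 ε2) :
    Tendsto (fun n => (bilayerDE L1 R1 L2 R2 B1 B2 e)^[n] 1) atTop (𝓝 0) := by
  have hmaps := bilayerDE_mapsTo hL1 hR1 hL2 hR2 hB1 hB2 ⟨he.1, he.2.le.trans hε2one⟩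
  have hone : (1 : ℝ × ℝ) ∈ Icc 0 1 := right_mem_Icc.2 zero_le_one
  have hmem : ∀ n, (bilayerDE L1 R1 L2 R2 B1 B2 e)^[n] 1 ∈ Icc 0 1 := fun n => hmaps.iterate n hone
  obtain ⟨q, hlim⟩ := Antitone.exists_tendsto_prod
    ((bilayerDE_monotoneOn hL1.1 hR1 hL2.1 hR2 hB1.1 hB2.1 he.1).antitone_iterate_of_map_le
      hmaps hone (hmaps hone).2) (bddBelow_Icc.mono (range_subset_iff.2 hmem))
  have hq : q ∈ Icc 0 1 := isClosed_Icc.mem_of_tendsto hlim (Eventually.of_forall hmem)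
  have hfix := isFixedPt_of_tendsto_iterate hlim continuous_bilayerDE.continuousAt
  have hq2 := bilayerDE_fixedPt_snd_eq_zero hL1.1 hR1 hL2.1 hR2 hB1.1 hB2 he.1 he.2 hlayer2 hq hfix
  have hq1 := bilayerDE_fixedPt_fst_eq_zero hL1.1 hR1 hR2.2 hε1 hε2 hP0 he.1 he.2 hq hfix hq2
  rwa [show q = 0 from Prod.ext hq1 hq2] at hlim

theorem not_tendsto_bilayerDE_iterate_fst (hL1 : IsDegreeDist L1) (hR1 : IsDegreeDist R1)
    (hL2 : IsDegreeDist L2) (hR2 : IsDegreeDist R2) (hB1 : IsDegreeDist B1)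
    (hB2 : IsDegreeDist B2) {ε1 ε2 : ℝ} (hε1 : ε1 = threshold (deMap L1 R1)) (hε1pos : 0 < ε1)
    (hε2 : 0 < ε2) (hP0 : B2.eval 0 = ε1 / ε2) (he : e ∈ Ioc ε2 1) :
    ¬ Tendsto (fun n => ((bilayerDE L1 R1 L2 R2 B1 B2 e)^[n] 1).1) atTop (𝓝 0) := by
  have hφ : ∀ y ∈ Ioc 0 1, 0 ≤ deMap L1 R1 y := fun y hy =>
    deMap_nonneg hL1.1 hR1 (Ioc_subset_Icc_self hy)
  have hc : ε1 < e * ε1 / ε2 := by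
    rw [lt_div_iff₀ hε2]
    nlinarith [he.1]
  obtain ⟨x0, hx0, hx0lt⟩ := exists_lt_mul_of_threshold_lt hφ (hε1 ▸ hε1pos) (by rwa [← hε1])
  have he0 : 0 ≤ e := hε2.le.trans he.1.le
  -- the stripe `x0 ≤ x` of the box is invariant, since `B2 ≥ P0 = ε1 / ε2` on `[0, 1]`
  have hinv : MapsTo (bilayerDE L1 R1 L2 R2 B1 B2 e) (Icc 0 1 ∩ {p | x0 ≤ p.1})
      (Icc 0 1 ∩ {p | x0 ≤ p.1}) := by
    rintro p ⟨hp, hx0p⟩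
    refine ⟨bilayerDE_mapsTo hL1 hR1 hL2 hR2 hB1 hB2 ⟨he0, he.2⟩ hp, ?_⟩
    obtain ⟨hp1, hp2⟩ := mem_Icc_zero_one_prod.1 hp
    have hx0Icc : x0 ∈ Icc 0 1 := Ioc_subset_Icc_self hx0
    have hL1le : deMap L1 R1 x0 ≤ deMap L1 R1 p.1 := deMap_monotoneOn hL1.1 hR1 hx0Icc hp1 hx0p
    have hB2ge : ε1 / ε2 ≤ deMap B2 R2 p.2 := by
      rw [← hP0, ← deMap_zero hR2.2]
      exact deMap_monotoneOn hB2.1 hR2 (left_mem_Icc.2 zero_le_one) hp2 hp2.1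
    calc x0 ≤ e * ε1 / ε2 * deMap L1 R1 x0 := hx0lt.le
      _ = e * deMap L1 R1 x0 * (ε1 / ε2) := by ring
      _ ≤ e * deMap L1 R1 p.1 * deMap B2 R2 p.2 :=
        mul_le_mul (by gcongr) hB2ge (by positivity) (mul_nonneg he0 (hφ x0 hx0 |>.trans hL1le))
  have hone : (1 : ℝ × ℝ) ∈ Icc 0 1 ∩ {p | x0 ≤ p.1} := ⟨right_mem_Icc.2 zero_le_one, hx0.2⟩
  intro hlim
  have := ge_of_tendsto' hlim fun n => (hinv.iterate n hone).2
  linarith [hx0.1]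

end Bilayer

theorem csSup_eq_of_Ico_subset_of_subset_Iic {α : Type*} [ConditionallyCompleteLinearOrder α]
    [DenselyOrdered α] {s : Set α} {a b : α} (hab : a < b)
    (hIco : Ico a b ⊆ s) (hIic : s ⊆ Iic b) : sSup s = b :=
  le_antisymm (csSup_le ((nonempty_Ico.2 hab).mono hIco) hIic)
    ((csSup_Ico hab).symm.trans_le (csSup_le_csSup ⟨b, hIic⟩ (nonempty_Ico.2 hab) hIco))

theorem stmt_11_general
    (L1 R1 L2 R2 B1 B2 : Polynomial ℝ)
    (hL1c : ∀ i, 0 ≤ L1.coeff i) (hR1c : ∀ i, 0 ≤ R1.coeff i)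
    (hL2c : ∀ i, 0 ≤ L2.coeff i) (hR2c : ∀ i, 0 ≤ R2.coeff i)
    (hB1c : ∀ i, 0 ≤ B1.coeff i) (hB2c : ∀ i, 0 ≤ B2.coeff i)
    (hL1one : L1.eval 1 = 1) (hR1one : R1.eval 1 = 1)
    (hL2one : L2.eval 1 = 1) (hR2one : R2.eval 1 = 1)
    (hB1one : B1.eval 1 = 1) (hB2one : B2.eval 1 = 1)
    (f g : ℝ → ℝ → ℝ → ℝ)
    (hf : ∀ ε x y, f ε x y = ε * L1.eval (1 - R1.eval (1 - x)) * B2.eval (1 - R2.eval (1 - y)))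
    (hg : ∀ ε x y, g ε x y = ε * B1.eval (1 - R1.eval (1 - x)) * L2.eval (1 - R2.eval (1 - y)))
    (xs ys : ℝ → ℕ → ℝ)
    (hxs0 : ∀ e, xs e 0 = 1) (hys0 : ∀ e, ys e 0 = 1)
    (hxsrec : ∀ e l, xs e (l + 1) = f e (xs e l) (ys e l))
    (hysrec : ∀ e l, ys e (l + 1) = g e (xs e l) (ys e l))
    (ε1 ε2 xstuck astuck : ℝ)
    (hε1 : ε1 = sInf ((fun x => x / L1.eval (1 - R1.eval (1 - x))) '' Ioc (0:ℝ) 1))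
    (hε1pos : 0 < ε1) (hε12 : ε1 < ε2) (hε2lt : ε2 < 1)
    (hxstuck : xstuck = sSup {x : ℝ | x ∈ Icc (0:ℝ) 1 ∧ x ≤ ε2 * L1.eval (1 - R1.eval (1 - x))})
    (hastuck : astuck = B1.eval (1 - R1.eval (1 - xstuck)))
    (hlayer2 : sInf ((fun y => y / L2.eval (1 - R2.eval (1 - y))) '' Ioc (0:ℝ) 1) = ε2 * astuck)
    (hP0 : B2.eval 0 = ε1 / ε2) :
    sSup {e : ℝ | e ∈ Icc (0:ℝ) 1 ∧ Tendsto (fun l => xs e l) atTop (nhds 0)} = ε2 := by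
  have hε2 : 0 < ε2 := hε1pos.trans hε12
  have hL1 : IsDegreeDist L1 := ⟨hL1c, hL1one⟩
  have hR1 : IsDegreeDist R1 := ⟨hR1c, hR1one⟩
  have hL2 : IsDegreeDist L2 := ⟨hL2c, hL2one⟩
  have hR2 : IsDegreeDist R2 := ⟨hR2c, hR2one⟩
  have hB1 : IsDegreeDist B1 := ⟨hB1c, hB1one⟩
  have hB2 : IsDegreeDist B2 := ⟨hB2c, hB2one⟩
  have hiter : ∀ e n, (xs e n, ys e n) = (bilayerDE L1 R1 L2 R2 B1 B2 e)^[n] 1 := by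
    intro e n
    induction n with
    | zero => rw [hxs0, hys0]; rfl
    | succ n ih => rw [iterate_succ_apply', ← ih, hxsrec, hysrec, hf, hg]; rfl
  have hxs : ∀ e, (fun n => xs e n) = fun n => ((bilayerDE L1 R1 L2 R2 B1 B2 e)^[n] 1).1 :=
    fun e => funext fun n => congrArg Prod.fst (hiter e n)
  subst hxstuck hastuck
  refine csSup_eq_of_Ico_subset_of_subset_Iic hε2
    (fun e he => ⟨⟨he.1, he.2.le.trans hε2lt.le⟩, ?_⟩) ?_
  · rw [hxs]
    exact (tendsto_bilayerDE_iterate_zero hL1 hR1 hL2 hR2 hB1 hB2 hε1 hε2 hε2lt.le hP0 hlayer2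
      he).fst_nhds
  · rintro e ⟨he, hlim⟩
    by_contra hgt
    rw [hxs] at hlim
    exact not_tendsto_bilayerDE_iterate_fst hL1 hR1 hL2 hR2 hB1 hB2 hε1 hε1pos hε2 hP0
      ⟨not_le.1 hgt, he.2⟩ hlim

/-- Theorem 3: a bilayer ensemble produced by Construction 1 has decoding threshold `ε2`. -/
theorem stmt_11
    (L1 R1 L2 R2 B1 B2 : Polynomial ℝ)
    (hL1c : ∀ i, 0 ≤ L1.coeff i) (hR1c : ∀ i, 0 ≤ R1.coeff i)
    (hL2c : ∀ i, 0 ≤ L2.coeff i) (hR2c : ∀ i, 0 ≤ R2.coeff i)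
    (hB1c : ∀ i, 0 ≤ B1.coeff i) (hB2c : ∀ i, 0 ≤ B2.coeff i)
    (hL1one : L1.eval 1 = 1) (hR1one : R1.eval 1 = 1)
    (hL2one : L2.eval 1 = 1) (hR2one : R2.eval 1 = 1)
    (hB1one : B1.eval 1 = 1) (hB2one : B2.eval 1 = 1)
    (hL1zero : L1.eval 0 = 0) (hB10 : B1.coeff 0 = 0) (hB11 : B1.coeff 1 = 0)
    (f g : ℝ → ℝ → ℝ → ℝ)
    (hf : ∀ ε x y, f ε x y = ε * L1.eval (1 - R1.eval (1 - x)) * B2.eval (1 - R2.eval (1 - y)))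
    (hg : ∀ ε x y, g ε x y = ε * B1.eval (1 - R1.eval (1 - x)) * L2.eval (1 - R2.eval (1 - y)))
    (xs ys : ℝ → ℕ → ℝ)
    (hxs0 : ∀ e, xs e 0 = 1) (hys0 : ∀ e, ys e 0 = 1)
    (hxsrec : ∀ e l, xs e (l + 1) = f e (xs e l) (ys e l))
    (hysrec : ∀ e l, ys e (l + 1) = g e (xs e l) (ys e l))
    (ε1 ε2 xstuck astuck : ℝ)
    (hε1 : ε1 = sInf ((fun x => x / L1.eval (1 - R1.eval (1 - x))) '' Ioc (0:ℝ) 1))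
    (hε1pos : 0 < ε1) (hε12 : ε1 < ε2) (hε2lt : ε2 < 1)
    (hxstuck : xstuck = sSup {x : ℝ | x ∈ Icc (0:ℝ) 1 ∧ x ≤ ε2 * L1.eval (1 - R1.eval (1 - x))})
    (hastuck : astuck = B1.eval (1 - R1.eval (1 - xstuck)))
    (hlayer2 : sInf ((fun y => y / L2.eval (1 - R2.eval (1 - y))) '' Ioc (0:ℝ) 1) = ε2 * astuck)
    (hP0 : B2.eval 0 = ε1 / ε2) :
    sSup {e : ℝ | e ∈ Icc (0:ℝ) 1 ∧ Tendsto (fun l => xs e l) atTop (nhds 0)} = ε2 :=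
  stmt_11_general L1 R1 L2 R2 B1 B2 hL1c hR1c hL2c hR2c hB1c hB2c hL1one hR1one hL2one hR2one hB1one
    hB2one f g hf hg xs ys hxs0 hys0 hxsrec hysrec ε1 ε2 xstuck astuck hε1 hε1pos hε12 hε2lt hxstuck
    hastuck hlayer2 hP0
end
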